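/- arXiv:1312.7324 — 3 statements merged into one kernel-verified Lean document; each statement's English description precedes it below -/
import Mathlib

section
/- Let X be a compact metric space, f : X → X continuous, U ⊆ X open, and K ⊆ U closed, with f(U) ⊆ K. Then CR(f) ∩ U ⊆ K, i.e., every chain recurrent point lying in U lies in K. -/
open Metric Set

variable {X : Type*} [MetricSpace X]

/-- The set of chain recurrent points of `f`. -/
def ChainRec (f : X → X) : Set X :=
  {x | ∀ ε > (0:ℝ), ∃ n : ℕ, 0 < n ∧ ∃ c : ℕ → X, c 0 = x ∧ c n = x ∧
    ∀ i < n, dist (f (c i)) (c (i+1)) < ε}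

/-- The chain recurrent set of `f` restricted to a subset `A` (chains lie in `A`),
    i.e. the chain recurrent set of `f` as a self-map of the subspace `A`. -/
def ChainRecIn (f : X → X) (A : Set X) : Set X :=
  {x | x ∈ A ∧ ∀ ε > (0:ℝ), ∃ n : ℕ, 0 < n ∧ ∃ c : ℕ → X, (∀ i ≤ n, c i ∈ A) ∧
    c 0 = x ∧ c n = x ∧ ∀ i < n, dist (f (c i)) (c (i+1)) < ε}

/-! Once `f` maps `U` into `K` and the `δ`-neighbourhood of `K` lies in `U`, an `ε`-chain
with `ε ≤ δ` starting in `U` never leaves `U`: each step lands within `ε` of `f (c i) ∈ K`.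
A chain recurrent `x ∈ U \ K` then returns to `x` by a last jump from `f (c m) ∈ K`, which is
impossible once `ε` is also smaller than the distance from `x` to `K`. -/

theorem chain_mem_of_thickening_subset {f : X → X} {U K : Set X} {ε : ℝ}
    (hKU : thickening ε K ⊆ U) (hfUK : f '' U ⊆ K) {n : ℕ} {c : ℕ → X} (hc0 : c 0 ∈ U)
    (hc : ∀ i < n, dist (f (c i)) (c (i + 1)) < ε) : ∀ i ≤ n, c i ∈ U := by
  intro i hi
  induction i with
  | zero => exact hc0
  | succ i ih =>
    have hfci : f (c i) ∈ K := hfUK (mem_image_of_mem f (ih (by omega)))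
    refine hKU (mem_thickening_iff.2 ⟨f (c i), hfci, ?_⟩)
    rw [dist_comm]
    exact hc i (by omega)

theorem stmt8_general [CompactSpace X] (f : X → X) (U K : Set X)
    (hU : IsOpen U) (hK : IsClosed K) (hKU : K ⊆ U) (hfUK : f '' U ⊆ K) :
    ChainRec f ∩ U ⊆ K := by
  rintro x ⟨hx, hxU⟩
  by_contra hxK
  obtain ⟨δ, hδ, hδU⟩ := hK.isCompact.exists_thickening_subset_open hU hKU
  obtain ⟨r, hr, hrK⟩ := Metric.isOpen_iff.1 hK.isOpen_compl x hxK
  obtain ⟨n, hn, c, hc0, hcn, hc⟩ := hx (min δ r) (lt_min hδ hr)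
  obtain ⟨m, rfl⟩ := Nat.exists_eq_add_one_of_ne_zero hn.ne'
  have hcU := chain_mem_of_thickening_subset ((thickening_mono (min_le_left δ r) K).trans hδU)
    hfUK (hc0 ▸ hxU) hc
  have hfcK : f (c m) ∈ K := hfUK (mem_image_of_mem f (hcU m (by omega)))
  have hfc_near : dist (f (c m)) x < r := hcn ▸ (hc m (by omega)).trans_le (min_le_right δ r)
  exact hrK hfc_near hfcK

theorem stmt8 [CompactSpace X] (f : X → X) (hf : Continuous f) (U K : Set X)
    (hU : IsOpen U) (hK : IsClosed K) (hKU : K ⊆ U) (hfUK : f '' U ⊆ K) :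
    ChainRec f ∩ U ⊆ K :=
  stmt8_general f U K hU hK hKU hfUK
end

section
/- Let X be a compact metric space. For each n ≥ 1, the set A_n = { f ∈ C(X,X) : every connected component of CR(f) has diameter < 1/n } is open in C(X,X) with the uniform metric. -/
open Metric Set

variable {X : Type*} [MetricSpace X]

/-!
Compactness of `CR(f)` and smallness of its components give finitely many pairwise disjoint
compact pieces of small diameter covering it, hence pairwise disjoint open sets `Uᵢ` of small
diameter covering it. Since `CR(f)` is the decreasing intersection of the closures of the sets
of points carrying `ε`-chain loops, and `ε`-chains of `g` are `(ε + d̂(f, g))`-chains of `f`,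
`CR(g) ⊆ ⋃ Uᵢ` for all `g` uniformly close to `f`. Then every component of `CR(g)`, being
connected, lies in a single `Uᵢ`.
-/

open Filter Topology Function

theorem exists_isClopen_mem_subset_of_connectedComponent_subset {α : Type*} [TopologicalSpace α]
    [T2Space α] [CompactSpace α] {x : α} {W : Set α} (hW : IsOpen W)
    (h : connectedComponent x ⊆ W) : ∃ Z, IsClopen Z ∧ x ∈ Z ∧ Z ⊆ W := by
  rw [connectedComponent_eq_iInter_isClopen, ← disjoint_compl_left_iff_subset,
    disjoint_iff_inter_eq_empty] at h
  obtain ⟨u, hu⟩ := hW.isClosed_compl.isCompact.elim_finite_subfamily_closed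
    (fun s : {s : Set α // IsClopen s ∧ x ∈ s} => (s : Set α)) (fun s => s.2.1.1) h
  refine ⟨⋂ s ∈ u, (s : Set α), isClopen_biInter_finset fun s _ => s.2.1,
    mem_iInter₂.2 fun s _ => s.2.2, ?_⟩
  rwa [← disjoint_compl_left_iff_subset, disjoint_iff_inter_eq_empty]

section CompactMetric

variable {Y : Type*} [MetricSpace Y] [CompactSpace Y] {c : ℝ}

theorem exists_isClopen_mem_diam_lt {y : Y} (h : diam (connectedComponent y) < c) :
    ∃ Z, IsClopen Z ∧ y ∈ Z ∧ diam Z < c := by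
  set r := (c - diam (connectedComponent y)) / 3 with hr_def
  have hr : 0 < r := by linarith
  obtain ⟨Z, hZ, hyZ, hZr⟩ := exists_isClopen_mem_subset_of_connectedComponent_subset
    (W := thickening r (connectedComponent y)) isOpen_thickening (self_subset_thickening hr _)
  refine ⟨Z, hZ, hyZ, ?_⟩
  calc diam Z ≤ diam (thickening r (connectedComponent y)) :=
        diam_mono hZr isBounded_of_compactSpace
    _ ≤ diam (connectedComponent y) + 2 * r := diam_thickening_le _ hr.le
    _ < c := by linarith

theorem exists_clopen_partition_diam_lt (h : ∀ y : Y, diam (connectedComponent y) < c) :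
    ∃ (m : ℕ) (P : Fin m → Set Y), (∀ i, IsClopen (P i)) ∧ Pairwise (Disjoint on P) ∧
      (∀ i, diam (P i) < c) ∧ ⋃ i, P i = univ := by
  choose Z hZ hyZ hZc using fun y => exists_isClopen_mem_diam_lt (h y)
  obtain ⟨t, ht⟩ := isCompact_univ.elim_finite_subcover Z (fun y => (hZ y).isOpen)
    fun y _ => mem_iUnion.2 ⟨y, hyZ y⟩
  let W : Fin t.card → Set Y := fun k => Z (t.equivFin.symm k)
  refine ⟨t.card, disjointed W, fun k => disjointedRec (fun _ _ hs => hs.diff (hZ _)) (hZ _),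
    disjoint_disjointed W,
    fun k => (diam_mono (disjointed_subset W k) isBounded_of_compactSpace).trans_lt (hZc _), ?_⟩
  refine iUnion_disjointed.trans (eq_univ_of_forall fun y => ?_)
  obtain ⟨z, hz, hyz⟩ := mem_iUnion₂.1 (ht (mem_univ y))
  exact mem_iUnion.2 ⟨t.equivFin ⟨z, hz⟩, by simpa [W] using hyz⟩

end CompactMetric

section Thickening

variable {α : Type*} [PseudoMetricSpace α] {s t : Set α}

theorem eventually_diam_thickening_lt {c : ℝ} (h : diam s < c) :
    ∀ᶠ δ in 𝓝[>] (0 : ℝ), diam (thickening δ s) < c := by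
  filter_upwards [Ioo_mem_nhdsGT (show (0 : ℝ) < (c - diam s) / 2 by linarith)] with δ hδ
  calc diam (thickening δ s) ≤ diam s + 2 * δ := diam_thickening_le s hδ.1.le
    _ < c := by linarith [hδ.2]

theorem Disjoint.eventually_disjoint_thickening (hst : Disjoint s t) (hs : IsCompact s)
    (ht : IsClosed t) : ∀ᶠ δ in 𝓝[>] (0 : ℝ), Disjoint (thickening δ s) (thickening δ t) := by
  obtain ⟨δ₀, hδ₀, hd⟩ := hst.exists_thickenings hs ht
  filter_upwards [Ioo_mem_nhdsGT hδ₀] with δ hδ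
  exact hd.mono (thickening_mono hδ.2.le _) (thickening_mono hδ.2.le _)

end Thickening

section Partition

variable {K : Set X} {c : ℝ}

theorem IsCompact.exists_compact_partition_diam_lt (hK : IsCompact K)
    (h : ∀ x ∈ K, diam (connectedComponentIn K x) < c) :
    ∃ (m : ℕ) (P : Fin m → Set X), (∀ i, IsCompact (P i)) ∧ Pairwise (Disjoint on P) ∧
      (∀ i, diam (P i) < c) ∧ K ⊆ ⋃ i, P i := by
  have := isCompact_iff_compactSpace.mp hK
  have hK' : ∀ y : K, diam (connectedComponent y) < c := fun y => by
    rw [← isometry_subtype_coe.diam_image, ← connectedComponentIn_eq_image y.2]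
    exact h y y.2
  obtain ⟨m, P, hP, hPd, hPc, hPu⟩ := exists_clopen_partition_diam_lt hK'
  refine ⟨m, fun i => (↑) '' P i, fun i => (hP i).isClosed.isCompact.image continuous_subtype_val,
    fun i j hij => (disjoint_image_iff Subtype.val_injective).2 (hPd hij),
    fun i => (isometry_subtype_coe.diam_image _).trans_lt (hPc i), fun x hx => ?_⟩
  obtain ⟨i, hi⟩ := mem_iUnion.1 (hPu ▸ mem_univ (⟨x, hx⟩ : K))
  exact mem_iUnion.2 ⟨i, _, hi, rfl⟩

theorem IsCompact.exists_pairwise_disjoint_open_cover_diam_lt (hK : IsCompact K)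
    (h : ∀ x ∈ K, diam (connectedComponentIn K x) < c) :
    ∃ (m : ℕ) (U : Fin m → Set X), (∀ i, IsOpen (U i)) ∧ Pairwise (Disjoint on U) ∧
      (∀ i, diam (U i) < c) ∧ K ⊆ ⋃ i, U i := by
  obtain ⟨m, P, hP, hPd, hPc, hKP⟩ := hK.exists_compact_partition_diam_lt h
  have hdisj : ∀ i j, ∀ᶠ δ in 𝓝[>] (0 : ℝ), i ≠ j →
      Disjoint (thickening δ (P i)) (thickening δ (P j)) := fun i j => by
    rcases eq_or_ne i j with rfl | hij
    · exact Eventually.of_forall fun _ h => absurd rfl h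
    · exact ((hPd hij).eventually_disjoint_thickening (hP i) (hP j).isClosed).mono
        fun _ h _ => h
  obtain ⟨δ, hδ, hδc, hδd⟩ := (eventually_mem_nhdsWithin.and
    ((eventually_all.2 fun i => eventually_diam_thickening_lt (hPc i)).and
      (eventually_all.2 fun i => eventually_all.2 (hdisj i)))).exists
  exact ⟨m, fun i => thickening δ (P i), fun _ => isOpen_thickening, fun i j => hδd i j, hδc,
    hKP.trans (iUnion_mono fun _ => self_subset_thickening hδ _)⟩

end Partition

theorem IsPreconnected.exists_subset_of_pairwise_disjoint {α ι : Type*} [TopologicalSpace α]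
    {s : Set α} {U : ι → Set α} (hs : IsPreconnected s) (hne : s.Nonempty)
    (hU : ∀ i, IsOpen (U i)) (hUd : Pairwise (Disjoint on U)) (hsU : s ⊆ ⋃ i, U i) :
    ∃ i, s ⊆ U i := by
  obtain ⟨x, hx⟩ := hne
  obtain ⟨i, hi⟩ := mem_iUnion.1 (hsU hx)
  refine ⟨i, hs.subset_left_of_subset_union (hU i) (isOpen_biUnion fun j (_ : j ≠ i) => hU j)
    (disjoint_iUnion₂_right.2 fun _ hj => hUd (Ne.symm hj)) (fun y hy => ?_) ⟨x, hx, hi⟩⟩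
  obtain ⟨j, hj⟩ := mem_iUnion.1 (hsU hy)
  by_cases hji : j = i
  · exact Or.inl (hji ▸ hj)
  · exact Or.inr (mem_iUnion₂.2 ⟨j, hji, hj⟩)

def EpsChainRec (f : X → X) (ε : ℝ) : Set X :=
  {x | ∃ n : ℕ, 0 < n ∧ ∃ c : ℕ → X, c 0 = x ∧ c n = x ∧
    ∀ i < n, dist (f (c i)) (c (i+1)) < ε}

section ChainRecurrence

variable {f g : X → X} {ε ε' δ : ℝ}

theorem chainRec_subset_epsChainRec (hε : 0 < ε) : ChainRec f ⊆ EpsChainRec f ε :=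
  fun _ hx => hx ε hε

theorem epsChainRec_mono (h : ε ≤ ε') : EpsChainRec f ε ⊆ EpsChainRec f ε' := by
  rintro x ⟨n, hn, c, hc0, hcn, hc⟩
  exact ⟨n, hn, c, hc0, hcn, fun i hi => (hc i hi).trans_le h⟩

theorem epsChainRec_subset_of_dist_le (h : ∀ x, dist (f x) (g x) ≤ δ) :
    EpsChainRec g ε ⊆ EpsChainRec f (ε + δ) := by
  rintro x ⟨n, hn, c, hc0, hcn, hc⟩
  refine ⟨n, hn, c, hc0, hcn, fun i hi => ?_⟩
  calc dist (f (c i)) (c (i + 1)) ≤ dist (f (c i)) (g (c i)) + dist (g (c i)) (c (i + 1)) :=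
        dist_triangle _ _ _
    _ < δ + ε := add_lt_add_of_le_of_lt (h _) (hc i hi)
    _ = ε + δ := add_comm _ _

/-- Moving the base point of an `ε`-chain loop to a nearby point costs at most `ε' - ε`. -/
theorem closure_epsChainRec_subset (hf : UniformContinuous f) (h : ε < ε') :
    closure (EpsChainRec f ε) ⊆ EpsChainRec f ε' := by
  set η := (ε' - ε) / 2 with hη
  have hη_pos : 0 < η := by linarith
  obtain ⟨δ, hδ, hfδ⟩ := Metric.uniformContinuous_iff.mp hf η hη_pos
  intro x hx
  obtain ⟨x', ⟨n, hn, c, hc0, hcn, hc⟩, hxx'⟩ := Metric.mem_closure_iff.mp hx (min δ η)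
    (lt_min hδ hη_pos)
  let c' : ℕ → X := fun j => if j = 0 ∨ j = n then x else c j
  have hc'c : ∀ j, dist (c' j) (c j) < min δ η := by
    intro j
    by_cases hj : j = 0 ∨ j = n
    · obtain rfl | rfl := hj <;> simpa [c', hc0, hcn] using hxx'
    · simp only [c', if_neg hj, dist_self]
      exact lt_min hδ hη_pos
  refine ⟨n, hn, c', by simp [c'], by simp [c'], fun i hi => ?_⟩
  calc dist (f (c' i)) (c' (i + 1))
      ≤ dist (f (c' i)) (f (c i)) + dist (f (c i)) (c (i + 1)) + dist (c (i + 1)) (c' (i + 1)) :=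
        dist_triangle4 _ _ _ _
    _ < η + ε + η := by
        gcongr
        · exact hfδ ((hc'c i).trans_le (min_le_left _ _))
        · exact hc i hi
        · rw [dist_comm]; exact (hc'c (i + 1)).trans_le (min_le_right _ _)
    _ = ε' := by rw [hη]; ring

theorem isClosed_chainRec (hf : UniformContinuous f) : IsClosed (ChainRec f) :=
  isClosed_of_closure_subset fun _ hx _ hε =>
    closure_epsChainRec_subset hf (half_lt_self hε)
      (closure_mono (chainRec_subset_epsChainRec (half_pos hε)) hx)

theorem exists_epsChainRec_subset [CompactSpace X] (hf : UniformContinuous f) {U : Set X}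
    (hU : IsOpen U) (hfU : ChainRec f ⊆ U) : ∃ ε > 0, EpsChainRec f ε ⊆ U := by
  let V : ℕ → Set X := fun k => closure (EpsChainRec f (1 / (k + 1)))
  have hV_anti : Antitone V := fun k l hkl =>
    closure_mono (epsChainRec_mono (Nat.one_div_le_one_div hkl))
  have hV_inter : ⋂ k, V k ⊆ ChainRec f := fun x hx ε hε => by
    obtain ⟨k, hk⟩ := exists_nat_one_div_lt hε
    exact closure_epsChainRec_subset hf hk (mem_iInter.mp hx k)
  obtain ⟨k, hk⟩ := exists_subset_nhds_of_isCompact hV_anti.directed_ge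
    (fun k => isClosed_closure.isCompact) fun x hx => hU.mem_nhds (hfU (hV_inter hx))
  exact ⟨1 / (k + 1), Nat.one_div_pos_of_nat, subset_closure.trans hk⟩

theorem eventually_chainRec_subset [CompactSpace X] (f : C(X, X)) {U : Set X} (hU : IsOpen U)
    (hfU : ChainRec f ⊆ U) : ∀ᶠ g : C(X, X) in 𝓝 f, ChainRec g ⊆ U := by
  obtain ⟨ε, hε, hεU⟩ := exists_epsChainRec_subset
    (CompactSpace.uniformContinuous_of_continuous f.continuous) hU hfU
  filter_upwards [ball_mem_nhds f (half_pos hε)] with g hg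
  calc ChainRec g ⊆ EpsChainRec g (ε / 2) := chainRec_subset_epsChainRec (half_pos hε)
    _ ⊆ EpsChainRec f (ε / 2 + dist f g) :=
        epsChainRec_subset_of_dist_le fun x => ContinuousMap.dist_apply_le_dist x
    _ ⊆ EpsChainRec f ε := epsChainRec_mono (by rw [dist_comm]; linarith [mem_ball.mp hg])
    _ ⊆ U := hεU

end ChainRecurrence

theorem stmt9_general [CompactSpace X] (n : ℕ) :
    IsOpen {f : C(X, X) | ∀ x ∈ ChainRec (⇑f),
      Metric.diam (connectedComponentIn (ChainRec (⇑f)) x) < 1 / (n:ℝ)} := by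
  refine isOpen_iff_mem_nhds.2 fun f hf => ?_
  have hCR : IsCompact (ChainRec f) :=
    (isClosed_chainRec (CompactSpace.uniformContinuous_of_continuous f.continuous)).isCompact
  obtain ⟨m, U, hU, hUd, hUc, hCRU⟩ := hCR.exists_pairwise_disjoint_open_cover_diam_lt hf
  filter_upwards [eventually_chainRec_subset f (isOpen_iUnion hU) hCRU] with g hg x hx
  obtain ⟨i, hi⟩ := isPreconnected_connectedComponentIn.exists_subset_of_pairwise_disjoint
    ⟨x, mem_connectedComponentIn hx⟩ hU hUd ((connectedComponentIn_subset _ _).trans hg)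
  exact (diam_mono hi isBounded_of_compactSpace).trans_lt (hUc i)

theorem stmt9 [CompactSpace X] (n : ℕ) (hn : 1 ≤ n) :
    IsOpen {f : C(X, X) | ∀ x ∈ ChainRec (⇑f),
      Metric.diam (connectedComponentIn (ChainRec (⇑f)) x) < 1 / (n:ℝ)} :=
  stmt9_general n
end

section
/- Let X be a compact metric space and suppose that for every ε > 0 there is a closed subset Y_ε ⊆ X and a retraction r_ε : X → Y_ε with sup_x d(r_ε(x), x) < ε such that the set { g ∈ C(Y_ε, Y_ε) : dim CR(g) = 0 } is dense in C(Y_ε, Y_ε). Then the set { f ∈ C(X,X) : dim CR(f) = 0 } is dense in C(X,X). -/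
/-!
Given `f` and `ε`, take `Y` and a retraction `r` that is very close to the identity, and a map
`g` of `Y` with zero-dimensional chain recurrent set approximating `r ∘ f` on `Y`; then `g ∘ r`
approximates `f`. Since `g ∘ r` maps `X` into the closed set `Y`, every chain recurrent point lies
in `Y`, and a pseudo-orbit of `g ∘ r` can be moved into `Y` by replacing each interior point with
the image of its predecessor; uniform continuity keeps it a pseudo-orbit. Hence
`CR(g ∘ r) = CR(g|_Y)`, which is zero-dimensional.
-/

open Metric Set

variable {X : Type*} [MetricSpace X]

theorem chainRec_subset_closure_range (f : X → X) : ChainRec f ⊆ closure (range f) := by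
  intro x hx
  refine Metric.mem_closure_iff.2 fun ε hε => ?_
  obtain ⟨n, hn, c, -, hcn, hc⟩ := hx ε hε
  refine ⟨f (c (n - 1)), mem_range_self _, ?_⟩
  have hlast := hc (n - 1) (by omega)
  rwa [Nat.sub_add_cancel hn, hcn, dist_comm] at hlast

theorem chainRecIn_subset_chainRec (f : X → X) (A : Set X) : ChainRecIn f A ⊆ ChainRec f := by
  rintro x ⟨-, hx⟩ ε hε
  obtain ⟨n, hn, c, -, hc0, hcn, hc⟩ := hx ε hε
  exact ⟨n, hn, c, hc0, hcn, hc⟩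

theorem chainRecIn_congr {f g : X → X} {A : Set X} (h : EqOn f g A) :
    ChainRecIn f A = ChainRecIn g A := by
  have key : ∀ {f g : X → X}, EqOn f g A → ChainRecIn f A ⊆ ChainRecIn g A := by
    rintro f g h x ⟨hxA, hx⟩
    refine ⟨hxA, fun ε hε => ?_⟩
    obtain ⟨n, hn, c, hcA, hc0, hcn, hc⟩ := hx ε hε
    exact ⟨n, hn, c, hcA, hc0, hcn, fun i hi => h (hcA i hi.le) ▸ hc i hi⟩
  exact (key h).antisymm (key h.symm)

theorem UniformContinuous.exists_pos_pseudoOrbit_stable {f : X → X} (hf : UniformContinuous f)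
    {δ : ℝ} (hδ : 0 < δ) :
    ∃ η > 0, ∀ (n : ℕ) (c c' : ℕ → X), (∀ i < n, dist (f (c i)) (c (i + 1)) < η) →
      (∀ i ≤ n, dist (c' i) (c i) < η) → ∀ i < n, dist (f (c' i)) (c' (i + 1)) < δ := by
  obtain ⟨η, hη, hfη⟩ := Metric.uniformContinuous_iff.1 hf (δ / 3) (by positivity)
  refine ⟨min (δ / 3) η, lt_min (by positivity) hη, fun n c c' hc hc' i hi => ?_⟩
  have h₁ : dist (f (c' i)) (f (c i)) < δ / 3 := hfη ((hc' i hi.le).trans_le (min_le_right _ _))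
  have h₂ : dist (f (c i)) (c (i + 1)) < δ / 3 := (hc i hi).trans_le (min_le_left _ _)
  have h₃ : dist (c (i + 1)) (c' (i + 1)) < δ / 3 := by
    rw [dist_comm]; exact (hc' (i + 1) hi).trans_le (min_le_left _ _)
  calc dist (f (c' i)) (c' (i + 1))
      ≤ dist (f (c' i)) (f (c i)) + dist (f (c i)) (c (i + 1)) + dist (c (i + 1)) (c' (i + 1)) :=
        dist_triangle4 _ _ _ _
    _ < δ := by linarith

theorem chainRec_eq_chainRecIn {f : X → X} (hf : UniformContinuous f) {Y : Set X}
    (hY : IsClosed Y) (hfY : ∀ x, f x ∈ Y) : ChainRec f = ChainRecIn f Y := by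
  refine Subset.antisymm (fun x hx => ?_) (chainRecIn_subset_chainRec f Y)
  have hxY : x ∈ Y :=
    hY.closure_subset_iff.2 (range_subset_iff.2 hfY) (chainRec_subset_closure_range f hx)
  refine ⟨hxY, fun δ hδ => ?_⟩
  obtain ⟨η, hη, hstable⟩ := hf.exists_pos_pseudoOrbit_stable hδ
  obtain ⟨n, hn, c, hc0, hcn, hc⟩ := hx η hη
  let c' : ℕ → X := fun i => if 0 < i ∧ i < n then f (c (i - 1)) else c i
  refine ⟨n, hn, c', fun i hi => ?_, by simp [c', hc0], by simp [c', hcn], hstable n c c' hc ?_⟩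
  · simp only [c']
    split_ifs with hin
    · exact hfY _
    · obtain rfl | rfl : i = 0 ∨ i = n := by omega
      exacts [hc0 ▸ hxY, hcn ▸ hxY]
  · intro i hi
    simp only [c']
    split_ifs with hin
    · have hstep := hc (i - 1) (by omega)
      rwa [Nat.sub_add_cancel hin.1] at hstep
    · simpa using hη

theorem UniformContinuous.exists_pos_dist_comp_retraction_lt {f : X → X}
    (hf : UniformContinuous f) {ε : ℝ} (hε : 0 < ε) :
    ∃ η > 0, ∀ r g : X → X, (∀ x, dist (r x) x < η) →
      (∀ y ∈ range r, dist (r (f y)) (g y) < η) → ∀ x, dist (f x) (g (r x)) < ε := by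
  obtain ⟨η, hη, hfη⟩ := Metric.uniformContinuous_iff.1 hf (ε / 3) (by positivity)
  refine ⟨min (ε / 3) η, lt_min (by positivity) hη, fun r g hr hg x => ?_⟩
  have h₁ : dist (f x) (f (r x)) < ε / 3 := by
    rw [dist_comm]; exact hfη ((hr x).trans_le (min_le_right _ _))
  have h₂ : dist (f (r x)) (r (f (r x))) < ε / 3 := by
    rw [dist_comm]; exact (hr _).trans_le (min_le_left _ _)
  have h₃ : dist (r (f (r x))) (g (r x)) < ε / 3 :=
    (hg _ (mem_range_self x)).trans_le (min_le_left _ _)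
  calc dist (f x) (g (r x))
      ≤ dist (f x) (f (r x)) + dist (f (r x)) (r (f (r x))) + dist (r (f (r x))) (g (r x)) :=
        dist_triangle4 _ _ _ _
    _ < ε := by linarith

theorem stmt11 [CompactSpace X]
    (h : ∀ ε > (0:ℝ), ∃ Y : Set X, IsClosed Y ∧ ∃ r : X → X, Continuous r ∧
      (∀ x, r x ∈ Y) ∧ (∀ x ∈ Y, r x = x) ∧ (∀ x, dist (r x) x < ε) ∧
      -- zero-dimensional chain recurrent sets are dense in C(Y, Y):
      ∀ g : X → X, ContinuousOn g Y → MapsTo g Y Y → ∀ δ > (0:ℝ),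
        ∃ g' : X → X, ContinuousOn g' Y ∧ MapsTo g' Y Y ∧
          (∀ x ∈ Y, dist (g x) (g' x) < δ) ∧
          ∀ x ∈ ChainRecIn g' Y, connectedComponentIn (ChainRecIn g' Y) x = {x}) :
    Dense {f : C(X, X) | ∀ x ∈ ChainRec (⇑f),
      connectedComponentIn (ChainRec (⇑f)) x = {x}} := by
  refine Metric.dense_iff.2 fun f ε hε => ?_
  obtain ⟨η, hη, happrox⟩ := (CompactSpace.uniformContinuous_of_continuous
    f.continuous).exists_pos_dist_comp_retraction_lt hε
  obtain ⟨Y, hY, r, hr, hrY, hr_id, hr_near, hdense⟩ := h η hη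
  obtain ⟨g, hg, hgY, hg_near, hg_cr⟩ :=
    hdense (r ∘ f) (hr.comp f.continuous).continuousOn (fun x _ => hrY (f x)) η hη
  let F : C(X, X) := ⟨g ∘ r, hg.comp_continuous hr hrY⟩
  have hF : ChainRec F = ChainRecIn g Y := by
    rw [chainRec_eq_chainRecIn (CompactSpace.uniformContinuous_of_continuous F.continuous) hY
      fun x => hgY (hrY x)]
    exact chainRecIn_congr fun x hx => congrArg g (hr_id x hx)
  refine ⟨F, ?_, ?_⟩
  · rw [mem_ball, dist_comm]
    exact (ContinuousMap.dist_lt_iff hε).2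
      (happrox r g hr_near fun _ ⟨x, hx⟩ => hx ▸ hg_near (r x) (hrY x))
  · simpa only [mem_ofPred_eq, hF] using hg_cr
end
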